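/- For every X ∈ ℝ^{m×n} and every k ≥ rank(X), the nuclear norm satisfies ‖X‖_* = Σ_{i=1}^{N} σ_i(X) = min { (‖B‖_F² + ‖C‖_F²)/2 : B ∈ ℝ^{m×k}, C ∈ ℝ^{n×k}, BCᵀ = X }, and the minimum is attained. -/

import Mathlib

/-! Write `XᵀX = V diag(μ) Vᵀ` with `V` orthogonal and put `W = X V`: the columns of `W` are
orthogonal with squared norms `μ j`, `X = W Vᵀ`, and `∑ σᵢ(X) = ∑ √μⱼ`. For any `X = B Cᵀ`, the
partial isometry `U = W diag(μ^(-1/2))` gives `∑ √μⱼ = tr (Uᵀ B Cᵀ V) = ⟨Vᵀ C, Uᵀ B⟩`, which by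
AM–GM is at most `(‖Uᵀ B‖² + ‖Vᵀ C‖²) / 2 ≤ (‖B‖² + ‖C‖²) / 2`. Equality holds for
`B = W diag(μ^(-1/4))`, `C = V diag(μ^(1/4))`; their columns vanish outside the `rank X ≤ k`
indices with `μ j ≠ 0`, so they can be compressed to `k` columns. -/

noncomputable section
open Matrix Real

/-- The singular values of a real `m × n` matrix, in descending order,
indexed by `Fin (min m n)`: square roots of the eigenvalues of `Xᴴ * X`. -/
def sVal {m n : ℕ} (X : Matrix (Fin m) (Fin n) ℝ) (i : Fin (min m n)) : ℝ :=
  Real.sqrt ((show (Xᵀ * X).IsHermitian by simpa using Matrix.isHermitian_conjTranspose_mul_self X).eigenvalues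
    (Tuple.sort (fun j => -(show (Xᵀ * X).IsHermitian by simpa using Matrix.isHermitian_conjTranspose_mul_self X).eigenvalues j)
      (Fin.castLE (Nat.min_le_right m n) i)))

def regR {m n : ℕ} (f : ℝ → ℝ) (X : Matrix (Fin m) (Fin n) ℝ) : ℝ :=
  ∑ i, f (sVal X i)

def colNormSq {m k : ℕ} (B : Matrix (Fin m) (Fin k) ℝ) (i : Fin k) : ℝ :=
  ∑ j, (B j i) ^ 2

def colNorm {m k : ℕ} (B : Matrix (Fin m) (Fin k) ℝ) (i : Fin k) : ℝ :=
  Real.sqrt (colNormSq B i)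

def Rt {m n k : ℕ} (f : ℝ → ℝ) (B : Matrix (Fin m) (Fin k) ℝ)
    (C : Matrix (Fin n) (Fin k) ℝ) : ℝ :=
  ∑ i, f ((colNormSq B i + colNormSq C i) / 2)

/-- Frobenius inner product `⟨X,Y⟩ = tr(XᵀY)`. -/
def frobInner {m n : ℕ} (X Y : Matrix (Fin m) (Fin n) ℝ) : ℝ :=
  (Xᵀ * Y).trace

def frobSq {m n : ℕ} (X : Matrix (Fin m) (Fin n) ℝ) : ℝ :=
  (Xᵀ * X).trace

def fmu (μ x : ℝ) : ℝ := μ - max (Real.sqrt μ - x) 0 ^ 2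

section Frobenius

variable {m n k p : ℕ}

lemma frobSq_nonneg (M : Matrix (Fin m) (Fin n) ℝ) : 0 ≤ frobSq M := by
  simpa [frobSq] using (posSemidef_conjTranspose_mul_self M).trace_nonneg

lemma frobInner_le_frobSq_add_frobSq_div_two (P Q : Matrix (Fin m) (Fin n) ℝ) :
    frobInner P Q ≤ (frobSq P + frobSq Q) / 2 := by
  have hsymm : (Qᵀ * P).trace = (Pᵀ * Q).trace := by
    rw [← trace_transpose, transpose_mul, transpose_transpose]
  have hexpand : frobSq (P - Q) = frobSq P - 2 * frobInner P Q + frobSq Q := by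
    simp only [frobSq, frobInner, transpose_sub, Matrix.sub_mul, Matrix.mul_sub, trace_sub, hsymm]
    ring
  linarith [frobSq_nonneg (P - Q)]

lemma frobSq_transpose_mul_le (M : Matrix (Fin m) (Fin k) ℝ) {U : Matrix (Fin m) (Fin p) ℝ}
    (hU : U * Uᵀ * U = U) : frobSq (Uᵀ * M) ≤ frobSq M := by
  set Q := U * Uᵀ
  have hQQ : Q * Q = Q := by
    rw [show Q * Q = U * Uᵀ * U * Uᵀ by simp only [Q, Matrix.mul_assoc], hU]
  have hQ : (1 - Q)ᵀ * (1 - Q) = 1 - Q := by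
    rw [transpose_sub, transpose_one, show Qᵀ = Q by simp [Q],
      show (1 - Q) * (1 - Q) = 1 - Q - Q + Q * Q by noncomm_ring, hQQ]
    abel
  have hsplit : frobSq M = frobSq (Uᵀ * M) + frobSq ((1 - Q) * M) := by
    have e1 : (Uᵀ * M)ᵀ * (Uᵀ * M) = Mᵀ * Q * M := by
      simp only [Q, transpose_mul, transpose_transpose, Matrix.mul_assoc]
    have e2 : ((1 - Q) * M)ᵀ * ((1 - Q) * M) = Mᵀ * M - Mᵀ * Q * M := by
      rw [transpose_mul, Matrix.mul_assoc, ← Matrix.mul_assoc (1 - Q)ᵀ, hQ, Matrix.sub_mul,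
        Matrix.one_mul, Matrix.mul_sub, Matrix.mul_assoc Mᵀ Q M]
    simp only [frobSq, e1, e2, trace_sub]
    ring
  linarith [frobSq_nonneg ((1 - Q) * M)]

lemma frobSq_mul_of_mul_mul_transpose (M : Matrix (Fin m) (Fin n) ℝ)
    {S : Matrix (Fin n) (Fin k) ℝ} (hS : M * (S * Sᵀ) = M) : frobSq (M * S) = frobSq M := by
  rw [frobSq, frobSq, trace_mul_comm, transpose_mul,
    show M * S * (Sᵀ * Mᵀ) = M * (S * Sᵀ) * Mᵀ by simp only [Matrix.mul_assoc], hS,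
    trace_mul_comm]

end Frobenius

lemma transpose_mul_self_apply_self {m n : ℕ} (W : Matrix (Fin m) (Fin n) ℝ) (j : Fin n) :
    (Wᵀ * W) j j = ∑ a, W a j ^ 2 := by
  simp [mul_apply, sq]

section Gram

variable {m n : ℕ} {W : Matrix (Fin m) (Fin n) ℝ} {μ : Fin n → ℝ}

lemma nonneg_of_transpose_mul_self_eq_diagonal (hW : Wᵀ * W = diagonal μ) (j : Fin n) :
    0 ≤ μ j := by
  have h := transpose_mul_self_apply_self W j
  rw [hW, diagonal_apply_eq] at h
  rw [h]
  positivity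

lemma mul_diagonal_eq_self_of_transpose_mul_self_eq_diagonal (hW : Wᵀ * W = diagonal μ)
    {d : Fin n → ℝ} (hd : ∀ j, μ j ≠ 0 → d j = 1) : W * diagonal d = W := by
  ext a j
  rw [mul_diagonal]
  by_cases hμ : μ j = 0
  · have hcol := transpose_mul_self_apply_self W j
    rw [hW, diagonal_apply_eq, hμ, eq_comm,
      Finset.sum_eq_zero_iff_of_nonneg fun _ _ => sq_nonneg _] at hcol
    simp [pow_eq_zero_iff two_ne_zero |>.mp (hcol a (Finset.mem_univ a))]
  · rw [hd j hμ, mul_one]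

lemma mul_diagonal_transpose_mul_self (hW : Wᵀ * W = diagonal μ) (d : Fin n → ℝ) :
    (W * diagonal d)ᵀ * (W * diagonal d) = diagonal fun j => d j ^ 2 * μ j := by
  rw [transpose_mul, diagonal_transpose, Matrix.mul_assoc, ← Matrix.mul_assoc Wᵀ, hW,
    diagonal_mul_diagonal, diagonal_mul_diagonal]
  congr 1
  ext j
  ring

end Gram

lemma exists_mul_transpose_eq_diagonal_indicator {n k : ℕ} (P : Finset (Fin n))
    (hP : P.card ≤ k) :
    ∃ S : Matrix (Fin n) (Fin k) ℝ, S * Sᵀ = diagonal fun j => if j ∈ P then 1 else 0 := by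
  classical
  let e : P ↪ Fin k := P.equivFin.toEmbedding.trans (Fin.castLEEmb hP)
  refine ⟨of fun j c => if h : j ∈ P then (if e ⟨j, h⟩ = c then 1 else 0) else 0, ?_⟩
  ext i j
  by_cases hi : i ∈ P <;> by_cases hj : j ∈ P <;> simp [mul_apply, diagonal_apply, hi, hj]
  exact ne_of_mem_of_not_mem hi hj

lemma Antitone.eq_zero_of_card_filter_ne_zero_le {α : Type*} [PartialOrder α] [Zero α]
    [DecidableEq α] {n r : ℕ} {g : Fin n → α} (hg : Antitone g) (hg0 : ∀ j, 0 ≤ g j)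
    (hr : (Finset.univ.filter fun j => g j ≠ 0).card ≤ r) {j : Fin n} (hj : r ≤ j) :
    g j = 0 := by
  by_contra hne
  have hsub : Finset.Iic j ⊆ Finset.univ.filter fun i => g i ≠ 0 := fun i hi =>
    Finset.mem_filter.mpr ⟨Finset.mem_univ _,
      ((hg0 j).lt_of_ne' hne |>.trans_le (hg (Finset.mem_Iic.mp hi))).ne'⟩
  have := (Finset.card_le_card hsub).trans hr
  rw [Fin.card_Iic] at this
  omega

lemma Matrix.isHermitian_transpose_mul_self {m n : Type*} [Fintype m] (X : Matrix m n ℝ) :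
    (Xᵀ * X).IsHermitian := by
  simpa using isHermitian_conjTranspose_mul_self X

lemma Matrix.exists_transpose_mul_self_eq_one_and_eq_diagonal_eigenvalues {m n : Type*}
    [Fintype m] [Fintype n] [DecidableEq n] (X : Matrix m n ℝ) :
    ∃ V : Matrix n n ℝ, Vᵀ * V = 1 ∧
      (X * V)ᵀ * (X * V) = diagonal (isHermitian_transpose_mul_self X).eigenvalues := by
  set hH := isHermitian_transpose_mul_self X
  refine ⟨hH.eigenvectorUnitary, ?_, ?_⟩
  · simpa [star_eq_conjTranspose] using Unitary.coe_star_mul_self hH.eigenvectorUnitary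
  · have h := hH.conjStarAlgAut_star_eigenvectorUnitary
    rw [Unitary.conjStarAlgAut_star_apply] at h
    simpa [star_eq_conjTranspose, transpose_mul, Matrix.mul_assoc] using h

lemma Matrix.card_filter_eigenvalues_transpose_mul_self_ne_zero {m n : Type*} [Fintype m]
    [Fintype n] [DecidableEq n] (X : Matrix m n ℝ) :
    (Finset.univ.filter fun j => (isHermitian_transpose_mul_self X).eigenvalues j ≠ 0).card
      = X.rank := by
  rw [← Fintype.card_subtype, ← (isHermitian_transpose_mul_self X).rank_eq_card_non_zero_eigs,
    rank_transpose_mul_self]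

/-- `sVal` keeps the first `min m n` eigenvalues in decreasing order; the others vanish, since at
most `rank X ≤ min m n` of them are nonzero. -/
theorem sum_sVal_eq_sum_sqrt_eigenvalues {m n : ℕ} (X : Matrix (Fin m) (Fin n) ℝ) :
    ∑ i, sVal X i = ∑ j, √((isHermitian_transpose_mul_self X).eigenvalues j) := by
  set hH := isHermitian_transpose_mul_self X
  have hpsd : (Xᵀ * X).PosSemidef := by simpa using posSemidef_conjTranspose_mul_self X
  set σ := Tuple.sort fun j => -hH.eigenvalues j
  have hanti : Antitone (hH.eigenvalues ∘ σ) := fun a b hab =>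
    neg_le_neg_iff.mp (Tuple.monotone_sort (fun j => -hH.eigenvalues j) hab)
  have hcard : (Finset.univ.filter fun j => (hH.eigenvalues ∘ σ) j ≠ 0).card ≤ min m n := by
    have hperm : Fintype.card {j // (hH.eigenvalues ∘ σ) j ≠ 0}
        = Fintype.card {j // hH.eigenvalues j ≠ 0} :=
      Fintype.card_congr (σ.subtypeEquiv fun _ => Iff.rfl)
    rw [← Fintype.card_subtype, hperm, Fintype.card_subtype,
      card_filter_eigenvalues_transpose_mul_self_ne_zero]
    exact le_min (rank_le_height X) (rank_le_width X)
  calc ∑ i, sVal X i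
      = ∑ j ∈ Finset.univ.map (Fin.castLEEmb (Nat.min_le_right m n)),
          √(hH.eigenvalues (σ j)) := by
        rw [Finset.sum_map]
        rfl
    _ = ∑ j, √(hH.eigenvalues (σ j)) := by
        refine Finset.sum_subset (Finset.subset_univ _) fun j _ hj => ?_
        have hjmin : min m n ≤ (j : ℕ) := by
          by_contra h
          exact hj (Finset.mem_map.mpr ⟨⟨j, not_le.mp h⟩, Finset.mem_univ _, rfl⟩)
        have hzero : hH.eigenvalues (σ j) = 0 :=
          hanti.eq_zero_of_card_filter_ne_zero_le (fun _ => hpsd.eigenvalues_nonneg _) hcard hjmin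
        rw [hzero, Real.sqrt_zero]
    _ = ∑ j, √(hH.eigenvalues j) := Equiv.sum_comp σ fun j => √(hH.eigenvalues j)

section Factorization

variable {m n p k : ℕ} {W : Matrix (Fin m) (Fin n) ℝ} {V : Matrix (Fin p) (Fin n) ℝ}
  {μ : Fin n → ℝ}

theorem sum_sqrt_le_of_mul_transpose_eq (hW : Wᵀ * W = diagonal μ) (hV : Vᵀ * V = 1)
    {B : Matrix (Fin m) (Fin k) ℝ} {C : Matrix (Fin p) (Fin k) ℝ} (hBC : B * Cᵀ = W * Vᵀ) :
    ∑ j, √(μ j) ≤ (frobSq B + frobSq C) / 2 := by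
  have hμ := nonneg_of_transpose_mul_self_eq_diagonal hW
  -- `(√0)⁻¹ = 0`, so `U` is a partial isometry onto the columns of `W` with `μ j ≠ 0`.
  set U := W * diagonal fun j => (√(μ j))⁻¹
  have hUU : Uᵀ * U = diagonal fun j => ((√(μ j))⁻¹) ^ 2 * μ j :=
    mul_diagonal_transpose_mul_self hW _
  have hU : U * Uᵀ * U = U := by
    rw [Matrix.mul_assoc, hUU]
    refine mul_diagonal_eq_self_of_transpose_mul_self_eq_diagonal hUU fun j hj => ?_
    rw [inv_pow, sq_sqrt (hμ j)] at hj ⊢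
    exact inv_mul_cancel₀ (right_ne_zero_of_mul hj)
  have hV' : V * Vᵀ * V = V := by rw [Matrix.mul_assoc, hV, Matrix.mul_one]
  have htrace : ∑ j, √(μ j) = frobInner (Vᵀ * C) (Uᵀ * B) := by
    calc ∑ j, √(μ j) = (Uᵀ * W).trace := by
          simp only [U, transpose_mul, diagonal_transpose, Matrix.mul_assoc, hW,
            diagonal_mul_diagonal, trace_diagonal, inv_mul_eq_div, div_sqrt]
      _ = (Uᵀ * (W * Vᵀ) * V).trace := by
          rw [Matrix.mul_assoc Uᵀ, Matrix.mul_assoc W, hV, Matrix.mul_one]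
      _ = (Uᵀ * B * (Cᵀ * V)).trace := by
          rw [← hBC]
          simp only [Matrix.mul_assoc]
      _ = frobInner (Vᵀ * C) (Uᵀ * B) := by
          rw [frobInner, transpose_mul Vᵀ C, transpose_transpose, trace_mul_comm]
  calc ∑ j, √(μ j) ≤ (frobSq (Vᵀ * C) + frobSq (Uᵀ * B)) / 2 :=
        htrace ▸ frobInner_le_frobSq_add_frobSq_div_two _ _
    _ ≤ (frobSq B + frobSq C) / 2 := by
        linarith [frobSq_transpose_mul_le C hV', frobSq_transpose_mul_le B hU]

theorem exists_mul_transpose_eq_and_sum_sqrt_eq (hW : Wᵀ * W = diagonal μ) (hV : Vᵀ * V = 1)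
    (hk : (Finset.univ.filter fun j => μ j ≠ 0).card ≤ k) :
    ∃ (B : Matrix (Fin m) (Fin k) ℝ) (C : Matrix (Fin p) (Fin k) ℝ),
      B * Cᵀ = W * Vᵀ ∧ ∑ j, √(μ j) = (frobSq B + frobSq C) / 2 := by
  have hμ := nonneg_of_transpose_mul_self_eq_diagonal hW
  obtain ⟨S, hS⟩ := exists_mul_transpose_eq_diagonal_indicator _ hk
  set B₀ := W * diagonal fun j => (√√(μ j))⁻¹
  set C₀ := V * diagonal fun j => √√(μ j)
  have hB₀ : B₀ᵀ * B₀ = diagonal fun j => √(μ j) := by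
    rw [mul_diagonal_transpose_mul_self hW]
    congr 1
    ext j
    rw [inv_pow, sq_sqrt (sqrt_nonneg _), inv_mul_eq_div, div_sqrt]
  have hC₀ : C₀ᵀ * C₀ = diagonal fun j => √(μ j) := by
    rw [mul_diagonal_transpose_mul_self (hV.trans diagonal_one.symm)]
    congr 1
    ext j
    rw [sq_sqrt (sqrt_nonneg _), mul_one]
  have hselect : ∀ j, √(μ j) ≠ 0 →
      (if j ∈ Finset.univ.filter fun j => μ j ≠ 0 then 1 else 0) = (1 : ℝ) :=
    fun j hj => if_pos (Finset.mem_filter.mpr ⟨Finset.mem_univ _, fun h => hj (by simp [h])⟩)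
  have hB₀S : B₀ * (S * Sᵀ) = B₀ := by
    rw [hS]; exact mul_diagonal_eq_self_of_transpose_mul_self_eq_diagonal hB₀ hselect
  have hC₀S : C₀ * (S * Sᵀ) = C₀ := by
    rw [hS]; exact mul_diagonal_eq_self_of_transpose_mul_self_eq_diagonal hC₀ hselect
  refine ⟨B₀ * S, C₀ * S, ?_, ?_⟩
  · calc B₀ * S * (C₀ * S)ᵀ = B₀ * (S * Sᵀ) * C₀ᵀ := by
          simp only [transpose_mul, Matrix.mul_assoc]
      _ = W * (diagonal fun j => (√√(μ j))⁻¹ * √√(μ j)) * Vᵀ := by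
          simp only [hB₀S, B₀, C₀, transpose_mul, diagonal_transpose, Matrix.mul_assoc]
          rw [← Matrix.mul_assoc (diagonal _) (diagonal _), diagonal_mul_diagonal]
      _ = W * Vᵀ := by
          rw [mul_diagonal_eq_self_of_transpose_mul_self_eq_diagonal hW fun j hj =>
            inv_mul_cancel₀ (sqrt_ne_zero'.mpr (sqrt_pos.mpr ((hμ j).lt_of_ne' hj)))]
  · rw [frobSq_mul_of_mul_mul_transpose _ hB₀S, frobSq_mul_of_mul_mul_transpose _ hC₀S, frobSq,
      frobSq, hB₀, hC₀, trace_diagonal]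
    ring

end Factorization

/-- For every `X` and every `k ≥ rank X`, the nuclear norm
`‖X‖_* = Σᵢ σᵢ(X)` is the attained minimum of `(‖B‖_F² + ‖C‖_F²)/2` over all
factorizations `X = B Cᵀ` with `k` columns. -/
theorem nuclear_norm_bilinear {m n k : ℕ} (X : Matrix (Fin m) (Fin n) ℝ)
    (hk : X.rank ≤ k) :
    IsLeast { s : ℝ | ∃ (B : Matrix (Fin m) (Fin k) ℝ) (C : Matrix (Fin n) (Fin k) ℝ),
        B * Cᵀ = X ∧ s = (frobSq B + frobSq C) / 2 }
      (∑ i, sVal X i) := by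
  obtain ⟨V, hV, hW⟩ := exists_transpose_mul_self_eq_one_and_eq_diagonal_eigenvalues X
  have hX : X * V * Vᵀ = X := by rw [Matrix.mul_assoc, mul_eq_one_comm.mp hV, Matrix.mul_one]
  rw [sum_sVal_eq_sum_sqrt_eigenvalues]
  refine ⟨?_, ?_⟩
  · obtain ⟨B, C, hBC, hsum⟩ := exists_mul_transpose_eq_and_sum_sqrt_eq hW hV
      ((card_filter_eigenvalues_transpose_mul_self_ne_zero X).trans_le hk)
    exact ⟨B, C, hBC.trans hX, hsum⟩
  · rintro _ ⟨B, C, hBC, rfl⟩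
    exact sum_sqrt_le_of_mul_transpose_eq hW hV (hBC.trans hX.symm)
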